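/- For every i ∈ {1, …, N} the following operator identities hold on smooth complex functions on Ω: Σ_{j=1}^N {x_j, S_{ij}} = 2x_i; Σ_{j=1}^N [x_j, S_{ij}] = 2[S, x_i]; Σ_{j=1}^N {∇_j, S_{ij}} = 2∇_i; Σ_{j=1}^N [∇_j, S_{ij}] = 2[S, ∇_i]. -/

import Mathlib

noncomputable section

open Finset

/-- Euclidean space `ℝ^N`. -/
abbrev E (N : ℕ) := EuclideanSpace ℝ (Fin N)

variable {N : ℕ}

/-- The reflection `s_α(x) = x - (2(α,x)/(α,α)) α`. -/
def sRefl (α x : E N) : E N := x - (2 * (inner ℝ α x : ℝ) / (inner ℝ α α : ℝ)) • α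

/-- Action of the reflection `s_α` on functions: `(s_α ψ)(x) = ψ(s_α⁻¹ x) = ψ(s_α x)`. -/
def refOp (α : E N) (f : E N → ℂ) : E N → ℂ := fun x => f (sRefl α x)

/-- Multiplication by the `k`-th coordinate. -/
def mulX (k : Fin N) (f : E N → ℂ) : E N → ℂ := fun x => (x k : ℂ) * f x

/-- The partial derivative `∂_i`. -/
def pd (i : Fin N) (f : E N → ℂ) : E N → ℂ :=
  fun x => fderiv ℝ f x (EuclideanSpace.single i 1)

/-- The Dunkl operator `∇_i = ∂_i − Σ_{α∈𝓡₊} g_α α_i (α,x)⁻¹ s_α`. -/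
def dunkl (Rp : Finset (E N)) (g : E N → ℂ) (i : Fin N) (f : E N → ℂ) : E N → ℂ :=
  fun x => pd i f x - ∑ α ∈ Rp, g α * (α i : ℂ) * ((inner ℝ α x : ℝ) : ℂ)⁻¹ * refOp α f x

/-- The operator `S_{ij} = δ_{ij} + Σ_{α∈𝓡₊} (2 g_α α_i α_j/(α,α)) s_α`. -/
def Sop (Rp : Finset (E N)) (g : E N → ℂ) (i j : Fin N) (f : E N → ℂ) : E N → ℂ :=
  fun x => (if i = j then 1 else 0) * f x
    + ∑ α ∈ Rp, 2 * g α * (α i : ℂ) * (α j : ℂ) / ((inner ℝ α α : ℝ) : ℂ) * refOp α f x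

/-- The element `S = −Σ_{α∈𝓡₊} g_α s_α` acting as an operator. -/
def Sbig (Rp : Finset (E N)) (g : E N → ℂ) (f : E N → ℂ) : E N → ℂ :=
  fun x => -∑ α ∈ Rp, g α * refOp α f x

/-- The Dunkl angular momentum `L_{ij} = x_i ∇_j − x_j ∇_i`. -/
def Lop (Rp : Finset (E N)) (g : E N → ℂ) (i j : Fin N) (f : E N → ℂ) : E N → ℂ :=
  fun x => (x i : ℂ) * dunkl Rp g j f x - (x j : ℂ) * dunkl Rp g i f x

/-- The Dunkl Laplacian `∇² = Σ_j ∇_j²`. -/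
def lapD (Rp : Finset (E N)) (g : E N → ℂ) (f : E N → ℂ) : E N → ℂ :=
  fun x => ∑ j, dunkl Rp g j (dunkl Rp g j f) x

/-- The Dunkl--Coulomb Hamiltonian `ℋ_γ = Σ_i ∇_i² + 2γ r⁻¹`. -/
def ham (Rp : Finset (E N)) (g : E N → ℂ) (γ : ℂ) (f : E N → ℂ) : E N → ℂ :=
  fun x => lapD Rp g f x + 2 * γ * (‖x‖ : ℂ)⁻¹ * f x

/-- The Dunkl Laplace--Runge--Lenz vector component
`A_i = −(1/2) Σ_j {L_{ij}, ∇_j} + (1/2)[∇_i, S] − γ x_i r⁻¹`. -/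
def lrl (Rp : Finset (E N)) (g : E N → ℂ) (γ : ℂ) (i : Fin N) (f : E N → ℂ) : E N → ℂ :=
  fun x =>
    -(1 / 2 : ℂ) * ∑ j, (Lop Rp g i j (dunkl Rp g j f) x + dunkl Rp g j (Lop Rp g i j f) x)
    + (1 / 2 : ℂ) * (dunkl Rp g i (Sbig Rp g f) x - Sbig Rp g (dunkl Rp g i f) x)
    - γ * (x i : ℂ) * (‖x‖ : ℂ)⁻¹ * f x

/-- The Euler operator `r∂_r = Σ_k x_k ∂_k`. -/
def euler (f : E N → ℂ) : E N → ℂ := fun x => ∑ k, (x k : ℂ) * pd k f x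

/-!
Both `x` and `∇` are vector operators: under a reflection they transform like vectors,
`(V_j f)(s_α x) = Σ_k (s_α)_{jk} (V_k (s_α f))(x)`. For the Dunkl operators this follows by
reindexing the positive roots through `s_α`, using the `W`-invariance of `g`. Expanding `S_{ij}`,
the `α`-term of `Σ_j {V_j, S_{ij}}` pairs `α · V` applied before and after `s_α`; since `s_α`
reverses the `α`-component, these cancel in the anticommutator and add up to `2[S, V_i]` in the
commutator.
-/

open scoped RealInnerProductSpace

lemma sRefl_apply_coord (α x : E N) (k : Fin N) :
    sRefl α x k = x k - 2 * ⟪α, x⟫ / ⟪α, α⟫ * α k := by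
  simp [sRefl]

lemma inner_sRefl_right (α x y : E N) : ⟪x, sRefl α y⟫ = ⟪sRefl α x, y⟫ := by
  simp only [sRefl, inner_sub_right, inner_sub_left, real_inner_smul_right,
    real_inner_smul_left]
  rw [real_inner_comm α x, real_inner_comm x α]
  ring

lemma sRefl_sRefl {α : E N} (hα : α ≠ 0) (x : E N) : sRefl α (sRefl α x) = x := by
  have h : ⟪α, α⟫ ≠ 0 := inner_self_ne_zero.mpr hα
  simp only [sRefl, inner_sub_right, real_inner_smul_right, div_mul_cancel₀ _ h]
  match_scalars <;> ring

lemma sRefl_self {α : E N} (hα : α ≠ 0) : sRefl α α = -α := by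
  have h : ⟪α, α⟫ ≠ 0 := inner_self_ne_zero.mpr hα
  simp only [sRefl, mul_div_assoc, div_self h]
  match_scalars; ring

lemma sRefl_neg_left (α x : E N) : sRefl (-α) x = sRefl α x := by
  simp only [sRefl, inner_neg_left, inner_neg_right, mul_neg, neg_div, neg_smul, smul_neg, neg_neg]

def sReflCLM (α : E N) : E N →L[ℝ] E N :=
  ContinuousLinearMap.id ℝ (E N) - (2 / ⟪α, α⟫) • (innerSL ℝ α).smulRight α

lemma sReflCLM_apply (α x : E N) : sReflCLM α x = sRefl α x := by
  simp [sReflCLM, sRefl, smul_smul, div_mul_eq_mul_div]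

lemma sRefl_neg (α x : E N) : sRefl α (-x) = -sRefl α x := by
  simp only [← sReflCLM_apply, map_neg]

lemma sRefl_sRefl_left {α : E N} (hα : α ≠ 0) (β x : E N) :
    sRefl (sRefl α β) x = sRefl α (sRefl β (sRefl α x)) := by
  have hinner : ⟪sRefl α β, sRefl α β⟫ = ⟪β, β⟫ := by
    rw [inner_sRefl_right, sRefl_sRefl hα]
  conv_rhs => rw [← sReflCLM_apply, sRefl, map_sub, map_smul, sReflCLM_apply, sReflCLM_apply,
    sRefl_sRefl hα, inner_sRefl_right]
  rw [sRefl, hinner]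

lemma sum_eq_sum_pos_add_sum_pos {V M : Type*} [InvolutiveNeg V] [AddCommMonoid M]
    {R Rp : Finset V} (hsub : Rp ⊆ R) (hneg : ∀ β ∈ Rp, -β ∈ R)
    (hpos : ∀ α ∈ R, (α ∈ Rp ∧ -α ∉ Rp) ∨ (-α ∈ Rp ∧ α ∉ Rp))
    {T : V → M} (hT : ∀ β ∈ R, T (-β) = T β) :
    ∑ β ∈ R, T β = ∑ β ∈ Rp, T β + ∑ β ∈ Rp, T β := by
  classical
  rw [← sum_filter_add_sum_filter_not R (· ∈ Rp), filter_mem_eq_inter, inter_eq_right.mpr hsub]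
  congr 1
  refine sum_nbij' (-·) (-·) ?_ ?_ (fun _ _ => neg_neg _) (fun _ _ => neg_neg _) ?_
  · intro β hβ
    rw [mem_filter] at hβ
    rcases hpos β hβ.1 with h | h
    · exact absurd h.1 hβ.2
    · exact h.1
  · intro β hβ
    rw [mem_filter]
    refine ⟨hneg β hβ, ?_⟩
    rcases hpos β (hsub hβ) with h | h
    · exact h.2
    · exact absurd hβ h.2
  · intro β hβ
    exact (hT β (mem_filter.mp hβ).1).symm

lemma sum_pos_sRefl_eq {R Rp : Finset (E N)} (hR0 : ∀ α ∈ R, α ≠ 0)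
    (hRinv : ∀ α ∈ R, ∀ β ∈ R, sRefl α β ∈ R) (hsub : Rp ⊆ R)
    (hpos : ∀ α ∈ R, (α ∈ Rp ∧ -α ∉ Rp) ∨ (-α ∈ Rp ∧ α ∉ Rp))
    {α : E N} (hα : α ∈ R) {T : E N → ℂ} (hT : ∀ β ∈ R, T (-β) = T β) :
    ∑ β ∈ Rp, T (sRefl α β) = ∑ β ∈ Rp, T β := by
  -- An even function sums over `R` to twice its sum over `Rp`, and `s_α` permutes `R`.
  have hneg : ∀ β ∈ Rp, -β ∈ R := fun β hβ => by
    simpa only [sRefl_self (hR0 β (hsub hβ))] using hRinv β (hsub hβ) β (hsub hβ)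
  have hperm : ∑ β ∈ R, T (sRefl α β) = ∑ β ∈ R, T β :=
    sum_nbij' (sRefl α) (sRefl α) (hRinv α hα) (hRinv α hα)
      (fun β _ => sRefl_sRefl (hR0 α hα) β) (fun β _ => sRefl_sRefl (hR0 α hα) β) fun _ _ => rfl
  have hTs : ∀ β ∈ R, T (sRefl α (-β)) = T (sRefl α β) := fun β hβ => by
    rw [sRefl_neg, hT _ (hRinv α hα β hβ)]
  rw [sum_eq_sum_pos_add_sum_pos hsub hneg hpos hTs,
    sum_eq_sum_pos_add_sum_pos hsub hneg hpos hT] at hperm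
  linear_combination hperm / 2

/-- The reflection `s_α` acting on complex coordinate vectors `v : ℂ^N`. -/
def sReflVec (α : E N) (v : Fin N → ℂ) (j : Fin N) : ℂ :=
  v j - ((2 * α j / ⟪α, α⟫ : ℝ) : ℂ) * ∑ k, (α k : ℂ) * v k

lemma sum_ofReal_mul_ofReal (α β : E N) : ∑ k, (α k : ℂ) * (β k : ℂ) = ((⟪α, β⟫ : ℝ) : ℂ) := by
  simp [PiLp.inner_apply, mul_comm]

lemma sum_mul_sReflVec {α : E N} (hα : α ≠ 0) (v : Fin N → ℂ) :
    ∑ j, (α j : ℂ) * sReflVec α v j = -∑ k, (α k : ℂ) * v k := by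
  have h : ((⟪α, α⟫ : ℝ) : ℂ) ≠ 0 := Complex.ofReal_ne_zero.mpr (inner_self_ne_zero.mpr hα)
  have hsq : ∑ j, (α j : ℂ) * ((2 * α j / ⟪α, α⟫ : ℝ) : ℂ) = 2 := by
    push_cast
    simp_rw [← mul_div_assoc, mul_left_comm _ (2 : ℂ), ← sum_div, ← mul_sum,
      sum_ofReal_mul_ofReal, mul_div_assoc, div_self h, mul_one]
  simp only [sReflVec, mul_sub, sum_sub_distrib, ← mul_assoc, ← sum_mul, hsq]
  ring

lemma sReflVec_sub (α : E N) (v w : Fin N → ℂ) (j : Fin N) :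
    sReflVec α (fun k => v k - w k) j = sReflVec α v j - sReflVec α w j := by
  simp only [sReflVec, mul_sub, sum_sub_distrib]
  ring

lemma sReflVec_sum {ι : Type*} (α : E N) (s : Finset ι) (v : ι → Fin N → ℂ) (j : Fin N) :
    sReflVec α (fun k => ∑ b ∈ s, v b k) j = ∑ b ∈ s, sReflVec α (v b) j := by
  simp only [sReflVec, mul_sum, sum_sub_distrib]
  rw [sum_comm]

lemma sReflVec_ofReal_mul (α v : E N) (c : ℂ) (j : Fin N) :
    sReflVec α (fun k => (v k : ℂ) * c) j = (sRefl α v j : ℂ) * c := by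
  simp only [sReflVec, sRefl_apply_coord, ← mul_assoc, ← sum_mul, sum_ofReal_mul_ofReal]
  push_cast
  ring

lemma isOpen_setOf_inner_ne_zero (R : Finset (E N)) :
    IsOpen {x : E N | ∀ α ∈ R, ⟪α, x⟫ ≠ 0} := by
  simp only [Set.ofPred_forall]
  exact isOpen_biInter_finset fun α _ =>
    isOpen_ne_fun (continuous_const.inner continuous_id) continuous_const

lemma ContDiffOn.differentiableAt_of_inner_ne_zero {R : Finset (E N)} {f : E N → ℂ}
    (hf : ContDiffOn ℝ (⊤ : ℕ∞) f {x : E N | ∀ α ∈ R, ⟪α, x⟫ ≠ 0})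
    {x : E N} (hx : ∀ α ∈ R, ⟪α, x⟫ ≠ 0) : DifferentiableAt ℝ f x :=
  (hf.contDiffAt ((isOpen_setOf_inner_ne_zero R).mem_nhds hx)).differentiableAt (by simp)

lemma refOp_eq_comp (α : E N) (f : E N → ℂ) : refOp α f = f ∘ sReflCLM α := by
  funext y
  simp [refOp, sReflCLM_apply]

lemma DifferentiableAt.refOp {f : E N → ℂ} {α x : E N}
    (hf : DifferentiableAt ℝ f (sRefl α x)) : DifferentiableAt ℝ (refOp α f) x := by
  rw [← sReflCLM_apply] at hf
  rw [refOp_eq_comp]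
  exact hf.comp x (sReflCLM α).differentiableAt

lemma pd_refOp {f : E N → ℂ} {α x : E N} (hf : DifferentiableAt ℝ f (sRefl α x)) (k : Fin N) :
    pd k (refOp α f) x = fderiv ℝ f (sRefl α x) (sRefl α (EuclideanSpace.single k 1)) := by
  rw [← sReflCLM_apply] at hf
  rw [pd, refOp_eq_comp, fderiv_comp x hf (sReflCLM α).differentiableAt, (sReflCLM α).fderiv]
  simp [sReflCLM_apply]

lemma sum_mul_apply_single (L : E N →L[ℝ] ℂ) (v : E N) :
    ∑ k, (v k : ℂ) * L (EuclideanSpace.single k 1) = L v := by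
  conv_rhs => rw [← (EuclideanSpace.basisFun (Fin N) ℝ).sum_repr v]
  simp [map_sum, Complex.real_smul]

lemma pd_apply_sRefl {f : E N → ℂ} {α x : E N} (hα : α ≠ 0)
    (hf : DifferentiableAt ℝ f (sRefl α x)) (j : Fin N) :
    pd j f (sRefl α x) = sReflVec α (fun k => pd k (refOp α f) x) j := by
  have hsum : ∑ k, (α k : ℂ) * fderiv ℝ f (sRefl α x) (sRefl α (EuclideanSpace.single k 1)) =
      -fderiv ℝ f (sRefl α x) α := by
    simpa [sReflCLM_apply, sRefl_self hα] using
      sum_mul_apply_single ((fderiv ℝ f (sRefl α x)).comp (sReflCLM α)) α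
  have hsingle : sRefl α (EuclideanSpace.single j 1) =
      EuclideanSpace.single j 1 - (2 * α j / ⟪α, α⟫) • α := by
    simp [sRefl, EuclideanSpace.inner_single_right]
  simp only [sReflVec, pd_refOp hf, hsum, hsingle, map_sub, map_smul, Complex.real_smul]
  rw [pd]
  ring

lemma pd_linear_comb {ι : Type*} (j : Fin N) (c₀ : ℂ) {f : E N → ℂ} {s : Finset ι} (c : ι → ℂ)
    {F : ι → E N → ℂ} {x : E N} (hf : DifferentiableAt ℝ f x)
    (hF : ∀ b ∈ s, DifferentiableAt ℝ (F b) x) :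
    pd j (fun y => c₀ * f y + ∑ b ∈ s, c b * F b y) x =
      c₀ * pd j f x + ∑ b ∈ s, c b * pd j (F b) x := by
  have hcF : ∀ b ∈ s, DifferentiableAt ℝ (fun y => c b * F b y) x :=
    fun b hb => (hF b hb).const_mul (c b)
  simp only [pd, fderiv_fun_add (hf.const_mul c₀) (DifferentiableAt.fun_sum hcF),
    fderiv_fun_sum hcF, fderiv_const_mul hf, add_apply, _root_.sum_apply, smul_apply, smul_eq_mul]
  congr 1
  exact sum_congr rfl fun b hb => by rw [fderiv_const_mul (hF b hb), smul_apply, smul_eq_mul]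

def dunklRefl (Rp : Finset (E N)) (g : E N → ℂ) (j : Fin N) (f : E N → ℂ) : E N → ℂ :=
  fun x => ∑ α ∈ Rp, g α * (α j : ℂ) * ((⟪α, x⟫ : ℝ) : ℂ)⁻¹ * refOp α f x

lemma dunkl_eq_pd_sub_dunklRefl (Rp : Finset (E N)) (g : E N → ℂ) (j : Fin N) (f : E N → ℂ)
    (x : E N) : dunkl Rp g j f x = pd j f x - dunklRefl Rp g j f x := rfl

lemma dunklRefl_linear_comb {ι : Type*} (Rp : Finset (E N)) (g : E N → ℂ) (j : Fin N) (c₀ : ℂ)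
    (f : E N → ℂ) (s : Finset ι) (c : ι → ℂ) (F : ι → E N → ℂ) (x : E N) :
    dunklRefl Rp g j (fun y => c₀ * f y + ∑ b ∈ s, c b * F b y) x =
      c₀ * dunklRefl Rp g j f x + ∑ b ∈ s, c b * dunklRefl Rp g j (F b) x := by
  simp only [dunklRefl, refOp, mul_add, mul_sum, sum_add_distrib]
  rw [sum_comm (s := s)]
  congr 1 <;> refine sum_congr rfl fun _ _ => ?_
  · ring
  · exact sum_congr rfl fun _ _ => by ring

lemma dunkl_linear_comb {ι : Type*} (Rp : Finset (E N)) (g : E N → ℂ) (j : Fin N) (c₀ : ℂ)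
    {f : E N → ℂ} {s : Finset ι} (c : ι → ℂ) {F : ι → E N → ℂ} {x : E N}
    (hf : DifferentiableAt ℝ f x) (hF : ∀ b ∈ s, DifferentiableAt ℝ (F b) x) :
    dunkl Rp g j (fun y => c₀ * f y + ∑ b ∈ s, c b * F b y) x =
      c₀ * dunkl Rp g j f x + ∑ b ∈ s, c b * dunkl Rp g j (F b) x := by
  simp only [dunkl_eq_pd_sub_dunklRefl, pd_linear_comb j c₀ c hf hF, dunklRefl_linear_comb,
    mul_sub, sum_sub_distrib]
  ring

lemma dunklRefl_apply_sRefl {R Rp : Finset (E N)} {g : E N → ℂ} (hR0 : ∀ α ∈ R, α ≠ 0)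
    (hRinv : ∀ α ∈ R, ∀ β ∈ R, sRefl α β ∈ R) (hsub : Rp ⊆ R)
    (hpos : ∀ α ∈ R, (α ∈ Rp ∧ -α ∉ Rp) ∨ (-α ∈ Rp ∧ α ∉ Rp))
    (hg : ∀ α ∈ R, ∀ β ∈ R, g (sRefl β α) = g α) (f : E N → ℂ) (x : E N) {α : E N} (hα : α ∈ R)
    (j : Fin N) :
    dunklRefl Rp g j f (sRefl α x) = sReflVec α (fun k => dunklRefl Rp g k (refOp α f) x) j := by
  have hα0 := hR0 α hα
  set T : E N → ℂ := fun γ =>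
    g γ * (sRefl α γ j : ℂ) * ((⟪γ, x⟫ : ℝ) : ℂ)⁻¹ * f (sRefl α (sRefl γ x)) with hTdef
  have hT : ∀ γ ∈ R, T (-γ) = T γ := fun γ hγ => by
    have hgneg : g (-γ) = g γ := by simpa only [sRefl_self (hR0 γ hγ)] using hg γ hγ γ hγ
    simp only [hTdef, hgneg, sRefl_neg, sRefl_neg_left, inner_neg_left, PiLp.neg_apply,
      Complex.ofReal_neg, inv_neg]
    ring
  have hTs : ∀ β ∈ Rp, g β * (β j : ℂ) * ((⟪β, sRefl α x⟫ : ℝ) : ℂ)⁻¹ * refOp β f (sRefl α x) =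
      T (sRefl α β) := fun β hβ => by
    simp only [hTdef, refOp, hg β (hsub hβ) α hα, sRefl_sRefl hα0, ← inner_sRefl_right,
      sRefl_sRefl_left hα0]
  have hdR : ∀ k, dunklRefl Rp g k (refOp α f) x =
      ∑ β ∈ Rp, (β k : ℂ) * (g β * ((⟪β, x⟫ : ℝ) : ℂ)⁻¹ * f (sRefl α (sRefl β x))) :=
    fun k => sum_congr rfl fun β _ => by simp only [refOp]; ring
  calc dunklRefl Rp g j f (sRefl α x) = ∑ β ∈ Rp, T (sRefl α β) := sum_congr rfl hTs
    _ = ∑ β ∈ Rp, T β := sum_pos_sRefl_eq hR0 hRinv hsub hpos hα hT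
    _ = _ := by
      simp only [hdR, sReflVec_sum, sReflVec_ofReal_mul, hTdef]
      exact sum_congr rfl fun β _ => by ring

lemma dunkl_apply_sRefl {R Rp : Finset (E N)} {g : E N → ℂ} (hR0 : ∀ α ∈ R, α ≠ 0)
    (hRinv : ∀ α ∈ R, ∀ β ∈ R, sRefl α β ∈ R) (hsub : Rp ⊆ R)
    (hpos : ∀ α ∈ R, (α ∈ Rp ∧ -α ∉ Rp) ∨ (-α ∈ Rp ∧ α ∉ Rp))
    (hg : ∀ α ∈ R, ∀ β ∈ R, g (sRefl β α) = g α) {f : E N → ℂ} {x α : E N} (hα : α ∈ R)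
    (hf : DifferentiableAt ℝ f (sRefl α x)) (j : Fin N) :
    dunkl Rp g j f (sRefl α x) = sReflVec α (fun k => dunkl Rp g k (refOp α f) x) j := by
  simp only [dunkl_eq_pd_sub_dunklRefl, sReflVec_sub, pd_apply_sRefl (hR0 α hα) hf,
    dunklRefl_apply_sRefl hR0 hRinv hsub hpos hg f x hα]

lemma mulX_linear_comb {ι : Type*} (j : Fin N) (c₀ : ℂ) (f : E N → ℂ) (s : Finset ι) (c : ι → ℂ)
    (F : ι → E N → ℂ) (x : E N) :
    mulX j (fun y => c₀ * f y + ∑ b ∈ s, c b * F b y) x =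
      c₀ * mulX j f x + ∑ b ∈ s, c b * mulX j (F b) x := by
  simp only [mulX, mul_add, mul_sum, mul_left_comm]

lemma mulX_apply_sRefl (α : E N) (f : E N → ℂ) (x : E N) (j : Fin N) :
    mulX j f (sRefl α x) = sReflVec α (fun k => mulX k (refOp α f) x) j :=
  (sReflVec_ofReal_mul α x _ j).symm

lemma sum_Sop_expansion (Rp : Finset (E N)) (g : E N → ℂ) (i : Fin N) (a : Fin N → ℂ)
    (b : E N → Fin N → ℂ) :
    ∑ j, ((if i = j then 1 else 0) * a j +
        ∑ α ∈ Rp, 2 * g α * (α i : ℂ) * (α j : ℂ) / ((⟪α, α⟫ : ℝ) : ℂ) * b α j) =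
      a i + ∑ α ∈ Rp, 2 * g α * (α i : ℂ) / ((⟪α, α⟫ : ℝ) : ℂ) * ∑ j, (α j : ℂ) * b α j := by
  simp only [sum_add_distrib, ite_mul, one_mul, zero_mul, sum_ite_eq, mem_univ, if_true, mul_sum]
  rw [sum_comm]
  exact congrArg _ (sum_congr rfl fun _ _ => sum_congr rfl fun _ _ => by ring)

section VectorOperator

variable {Rp : Finset (E N)} {g : E N → ℂ} {V : Fin N → (E N → ℂ) → E N → ℂ} {f : E N → ℂ}
  {x : E N}

lemma sum_apply_Sop
    (hlin : ∀ j c₀ (c : E N → ℂ), V j (fun y => c₀ * f y + ∑ α ∈ Rp, c α * refOp α f y) x =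
      c₀ * V j f x + ∑ α ∈ Rp, c α * V j (refOp α f) x) (i : Fin N) :
    ∑ j, V j (Sop Rp g i j f) x = V i f x +
      ∑ α ∈ Rp, 2 * g α * (α i : ℂ) / ((⟪α, α⟫ : ℝ) : ℂ) * ∑ j, (α j : ℂ) * V j (refOp α f) x := by
  exact (sum_congr rfl fun j _ => hlin j _ _).trans
    (sum_Sop_expansion Rp g i (fun j => V j f x) fun α j => V j (refOp α f) x)

lemma sum_Sop_apply (hRp0 : ∀ α ∈ Rp, α ≠ 0)
    (hequiv : ∀ α ∈ Rp, ∀ j, V j f (sRefl α x) = sReflVec α (fun k => V k (refOp α f) x) j)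
    (i : Fin N) :
    ∑ j, Sop Rp g i j (V j f) x = V i f x -
      ∑ α ∈ Rp, 2 * g α * (α i : ℂ) / ((⟪α, α⟫ : ℝ) : ℂ) * ∑ j, (α j : ℂ) * V j (refOp α f) x := by
  have hflip : ∀ α ∈ Rp, ∑ j, (α j : ℂ) * V j f (sRefl α x) = -∑ j, (α j : ℂ) * V j (refOp α f) x :=
    fun α hα => by simp only [hequiv α hα, sum_mul_sReflVec (hRp0 α hα)]
  refine (sum_Sop_expansion Rp g i _ fun α j => V j f (sRefl α x)).trans ?_
  rw [sum_congr rfl fun α hα => by rw [hflip α hα]]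
  simp only [mul_neg, sum_neg_distrib, sub_eq_add_neg]

lemma Sbig_apply_sub_apply_Sbig
    (hlin : ∀ j c₀ (c : E N → ℂ), V j (fun y => c₀ * f y + ∑ α ∈ Rp, c α * refOp α f y) x =
      c₀ * V j f x + ∑ α ∈ Rp, c α * V j (refOp α f) x)
    (hequiv : ∀ α ∈ Rp, ∀ j, V j f (sRefl α x) = sReflVec α (fun k => V k (refOp α f) x) j)
    (i : Fin N) :
    Sbig Rp g (V i f) x - V i (Sbig Rp g f) x =
      ∑ α ∈ Rp, 2 * g α * (α i : ℂ) / ((⟪α, α⟫ : ℝ) : ℂ) * ∑ j, (α j : ℂ) * V j (refOp α f) x := by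
  have hS : Sbig Rp g f = fun y => 0 * f y + ∑ α ∈ Rp, -g α * refOp α f y := by
    funext y
    simp only [Sbig, zero_mul, zero_add, neg_mul, sum_neg_distrib]
  rw [hS, hlin, Sbig, zero_mul, zero_add, ← sum_neg_distrib, ← sum_sub_distrib]
  refine sum_congr rfl fun α hα => ?_
  simp only [refOp, hequiv α hα, sReflVec]
  push_cast
  ring

lemma sum_anticomm_comm_Sop (hRp0 : ∀ α ∈ Rp, α ≠ 0)
    (hlin : ∀ j c₀ (c : E N → ℂ), V j (fun y => c₀ * f y + ∑ α ∈ Rp, c α * refOp α f y) x =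
      c₀ * V j f x + ∑ α ∈ Rp, c α * V j (refOp α f) x)
    (hequiv : ∀ α ∈ Rp, ∀ j, V j f (sRefl α x) = sReflVec α (fun k => V k (refOp α f) x) j)
    (i : Fin N) :
    ∑ j, (V j (Sop Rp g i j f) x + Sop Rp g i j (V j f) x) = 2 * V i f x ∧
      ∑ j, (V j (Sop Rp g i j f) x - Sop Rp g i j (V j f) x) =
        2 * (Sbig Rp g (V i f) x - V i (Sbig Rp g f) x) := by
  rw [sum_add_distrib, sum_sub_distrib, sum_apply_Sop hlin, sum_Sop_apply hRp0 hequiv,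
    Sbig_apply_sub_apply_Sbig hlin hequiv]
  constructor <;> ring

end VectorOperator

theorem statement3_general
    (R Rp : Finset (E N)) (g : E N → ℂ)
    (hR0 : ∀ α ∈ R, α ≠ (0 : E N))
    (hRinv : ∀ α ∈ R, ∀ β ∈ R, sRefl α β ∈ R)
    (hsub : Rp ⊆ R)
    (hpos : ∀ α ∈ R, (α ∈ Rp ∧ -α ∉ Rp) ∨ (-α ∈ Rp ∧ α ∉ Rp))
    (hg : ∀ α ∈ R, ∀ β ∈ R, g (sRefl β α) = g α)
    (i : Fin N)
    (f : E N → ℂ)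
    (hf : ContDiffOn ℝ (⊤ : ℕ∞) f {x : E N | ∀ α ∈ R, (inner ℝ α x : ℝ) ≠ 0})
    (x : E N) (hx : ∀ α ∈ R, (inner ℝ α x : ℝ) ≠ 0) :
    (∑ j, (mulX j (Sop Rp g i j f) x + Sop Rp g i j (mulX j f) x) = 2 * mulX i f x)
    ∧ (∑ j, (mulX j (Sop Rp g i j f) x - Sop Rp g i j (mulX j f) x)
        = 2 * (Sbig Rp g (mulX i f) x - mulX i (Sbig Rp g f) x))
    ∧ (∑ j, (dunkl Rp g j (Sop Rp g i j f) x + Sop Rp g i j (dunkl Rp g j f) x)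
        = 2 * dunkl Rp g i f x)
    ∧ (∑ j, (dunkl Rp g j (Sop Rp g i j f) x - Sop Rp g i j (dunkl Rp g j f) x)
        = 2 * (Sbig Rp g (dunkl Rp g i f) x - dunkl Rp g i (Sbig Rp g f) x)) := by
  have hRp0 : ∀ α ∈ Rp, α ≠ 0 := fun α hα => hR0 α (hsub hα)
  have hdiff : ∀ α ∈ R, DifferentiableAt ℝ f (sRefl α x) := fun α hα =>
    hf.differentiableAt_of_inner_ne_zero fun β hβ => by
      rw [inner_sRefl_right]
      exact hx _ (hRinv α hα β hβ)
  obtain ⟨hx₁, hx₂⟩ := sum_anticomm_comm_Sop (g := g) (V := mulX) hRp0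
    (fun j c₀ c => mulX_linear_comb j c₀ f Rp c _ x) (fun α _ j => mulX_apply_sRefl α f x j) i
  obtain ⟨hd₁, hd₂⟩ := sum_anticomm_comm_Sop (V := dunkl Rp g) hRp0
    (fun j c₀ c => dunkl_linear_comb Rp g j c₀ c (hf.differentiableAt_of_inner_ne_zero hx)
      fun α hα => (hdiff α (hsub hα)).refOp)
    (fun α hα j => dunkl_apply_sRefl hR0 hRinv hsub hpos hg (hsub hα) (hdiff α (hsub hα)) j) i
  exact ⟨hx₁, hx₂, hd₁, hd₂⟩

/-- `Σ_j {x_j, S_{ij}} = 2x_i`, `Σ_j [x_j, S_{ij}] = 2[S, x_i]`,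
`Σ_j {∇_j, S_{ij}} = 2∇_i`, `Σ_j [∇_j, S_{ij}] = 2[S, ∇_i]`
as operators on smooth complex functions on Ω. -/
theorem statement3
    (R Rp : Finset (E N)) (g : E N → ℂ)
    (hR0 : ∀ α ∈ R, α ≠ (0 : E N))
    (hred : ∀ α ∈ R, ∀ c : ℝ, c • α ∈ R → c = 1 ∨ c = -1)
    (hRinv : ∀ α ∈ R, ∀ β ∈ R, sRefl α β ∈ R)
    (hsub : Rp ⊆ R)
    (hpos : ∀ α ∈ R, (α ∈ Rp ∧ -α ∉ Rp) ∨ (-α ∈ Rp ∧ α ∉ Rp))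
    (hg : ∀ α ∈ R, ∀ β ∈ R, g (sRefl β α) = g α)
    (i : Fin N)
    (f : E N → ℂ)
    (hf : ContDiffOn ℝ (⊤ : ℕ∞) f {x : E N | ∀ α ∈ R, (inner ℝ α x : ℝ) ≠ 0})
    (x : E N) (hx : ∀ α ∈ R, (inner ℝ α x : ℝ) ≠ 0) :
    (∑ j, (mulX j (Sop Rp g i j f) x + Sop Rp g i j (mulX j f) x) = 2 * mulX i f x)
    ∧ (∑ j, (mulX j (Sop Rp g i j f) x - Sop Rp g i j (mulX j f) x)
        = 2 * (Sbig Rp g (mulX i f) x - mulX i (Sbig Rp g f) x))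
    ∧ (∑ j, (dunkl Rp g j (Sop Rp g i j f) x + Sop Rp g i j (dunkl Rp g j f) x)
        = 2 * dunkl Rp g i f x)
    ∧ (∑ j, (dunkl Rp g j (Sop Rp g i j f) x - Sop Rp g i j (dunkl Rp g j f) x)
        = 2 * (Sbig Rp g (dunkl Rp g i f) x - dunkl Rp g i (Sbig Rp g f) x)) :=
  statement3_general R Rp g hR0 hRinv hsub hpos hg i f hf x hx
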